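/- Under the hypotheses of Proposition 2, if additionally 3H(t₀)² < min{lim_{φ→+∞} V(φ), lim_{φ→−∞} V(φ)}, then lim_{t→∞} φ(t) = 0 and lim_{t→∞} H(t) = 0. -/

import Mathlib

/-!
`H = 0` is an equilibrium of the Raychaudhuri equation, since `|H'| ≤ 3 (γ + 2) H²`, so the
nonincreasing Hubble rate stays in `[0, H(t₀)]` and converges to some `H∞`. The constraint then
confines `φ` to the sublevel set `{V ≤ 3 H(t₀)²}`, which is compact because `3 H(t₀)²` lies below
both limits of `V` at `±∞`.

As `-H'` dominates `½ y² + ρ_m + ρ_r = 3 H² - V(φ)`, this quantity is integrable; its derivative is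
bounded, so it tends to `0` (Barbalat). Hence `y, ρ_m → 0` and `V(φ) → 3 H∞²`. If `H∞ ≠ 0`, then
`φ` eventually stays in a compact set on which `φ V'(φ) ≥ c > 0`, and the virial `φ y`, whose
derivative is `-φ V'(φ) + o(1)`, would tend to `-∞` while also tending to `0`. So `H∞ = 0`,
`V(φ) → 0`, and by compactness `φ → 0`.
-/

open Filter Set Topology MeasureTheory

theorem AntitoneOn.exists_tendsto_atTop {f : ℝ → ℝ} {a : ℝ} (hf : AntitoneOn f (Ici a))
    (hb : BddBelow (f '' Ici a)) : ∃ l, Tendsto f atTop (𝓝 l) := by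
  have hanti : Antitone fun t => f (max t a) := fun s t hst =>
    hf (le_max_right s a) (le_max_right t a) (max_le_max_right a hst)
  have hbdd : BddBelow (range fun t => f (max t a)) :=
    hb.mono (range_subset_iff.2 fun t => mem_image_of_mem f (le_max_right t a))
  refine ⟨_, (tendsto_atTop_ciInf hanti hbdd).congr' ?_⟩
  filter_upwards [eventually_ge_atTop a] with t ht
  rw [max_eq_left ht]

theorem tendsto_atBot_of_hasDerivAt_le_neg {f f' : ℝ → ℝ} {c : ℝ} (hc : 0 < c)
    (hf : ∀ᶠ t in atTop, HasDerivAt f (f' t) t) (hf' : ∀ᶠ t in atTop, f' t ≤ -c) :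
    Tendsto f atTop atBot := by
  obtain ⟨T, hT⟩ := (hf.and hf').exists_forall_of_atTop
  have hderiv : ∀ t, T ≤ t → HasDerivAt (fun t => f t + c * t) (f' t + c) t := fun t ht =>
    ((hT t ht).1.add ((hasDerivAt_id t).const_mul c)).congr_deriv (by simp)
  have hanti : AntitoneOn (fun t => f t + c * t) (Ici T) := by
    refine antitoneOn_of_hasDerivWithinAt_nonpos (convex_Ici T)
      (fun t ht => (hderiv t ht).continuousAt.continuousWithinAt)
      (fun t ht => (hderiv t (interior_subset ht)).hasDerivWithinAt) fun t ht => ?_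
    linarith [(hT t (interior_subset ht)).2]
  have hlin : Tendsto (fun t => f T + c * T - c * t) atTop atBot :=
    tendsto_atBot_add_const_left _ _ (tendsto_neg_atTop_atBot.comp (tendsto_id.const_mul_atTop hc))
  refine tendsto_atBot_mono' _ ?_ hlin
  filter_upwards [eventually_ge_atTop T] with t ht
  linarith [hanti self_mem_Ici ht ht]

theorem nonneg_of_abs_deriv_le_mul_sq {f f' : ℝ → ℝ} {a k : ℝ}
    (hf : ∀ t, a ≤ t → HasDerivAt f (f' t) t) (hf' : ∀ t, a ≤ t → |f' t| ≤ k * f t ^ 2)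
    (ha : 0 ≤ f a) : ∀ t, a ≤ t → 0 ≤ f t := by
  intro b hab
  by_contra! hb
  have hcont : ContinuousOn f (Icc a b) := fun t ht => (hf t ht.1).continuousAt.continuousWithinAt
  obtain ⟨c, hc, hfc⟩ := intermediate_value_Icc' hab hcont ⟨hb.le, ha⟩
  have hcont' : ContinuousOn f (Icc c b) := hcont.mono (Icc_subset_Icc_left hc.1)
  obtain ⟨C, hC⟩ := isCompact_Icc.exists_bound_of_continuousOn hcont'
  -- Gronwall: |f'| ≤ (|k| C) |f| on [c, b] and f c = 0
  have hzero := norm_le_gronwallBound_of_norm_deriv_right_le (δ := 0) (K := |k| * C) (ε := 0)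
    hcont' (fun t ht => (hf t (hc.1.trans ht.1)).hasDerivWithinAt) (by simp [hfc])
    (fun t ht => ?_) b ⟨hc.2, le_rfl⟩
  · rw [gronwallBound_ε0_δ0, norm_le_zero_iff] at hzero
    exact hb.ne hzero
  · have hCt : |f t| ≤ C := hC t (Ico_subset_Icc_self ht)
    rw [Real.norm_eq_abs, Real.norm_eq_abs, add_zero]
    calc |f' t| ≤ k * f t ^ 2 := hf' t (hc.1.trans ht.1)
      _ ≤ |k| * |f t| * |f t| := by
          rw [mul_assoc, ← sq, sq_abs]
          exact mul_le_mul_of_nonneg_right (le_abs_self k) (sq_nonneg _)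
      _ ≤ |k| * C * |f t| := by gcongr

theorem abs_mul_sub_integral_le {g : ℝ → ℝ} {t h C : ℝ} (hh : 0 ≤ h)
    (hg : IntervalIntegrable g volume t (t + h)) (hC : ∀ s ∈ Ioc t (t + h), |g t - g s| ≤ C) :
    |h * g t - ∫ s in t..t + h, g s| ≤ C * h := by
  have hle := intervalIntegral.norm_integral_le_of_norm_le_const (C := C)
    (f := fun s => g t - g s) (by rwa [uIoc_of_le (by linarith : t ≤ t + h)])
  rwa [intervalIntegral.integral_sub intervalIntegrable_const hg, intervalIntegral.integral_const,
    add_sub_cancel_left, smul_eq_mul, abs_of_nonneg hh] at hle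

theorem tendsto_zero_of_integrableOn_of_abs_deriv_le {g g' : ℝ → ℝ} {a L : ℝ}
    (hg : ∀ t, a ≤ t → HasDerivAt g (g' t) t) (hg' : ∀ t, a ≤ t → |g' t| ≤ L)
    (hint : IntegrableOn g (Ioi a)) : Tendsto g atTop (𝓝 0) := by
  have hL : 0 ≤ L := (abs_nonneg _).trans (hg' a le_rfl)
  have hlip : ∀ s t, a ≤ s → a ≤ t → |g s - g t| ≤ L * |s - t| := fun s t hs ht =>
    Convex.norm_image_sub_le_of_norm_hasDerivWithin_le (fun x hx => (hg x hx).hasDerivWithinAt)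
      hg' (convex_Ici a) ht hs
  have hii : ∀ s t, a ≤ s → a ≤ t → IntervalIntegrable g volume s t := fun s t hs ht =>
    ContinuousOn.intervalIntegrable fun x hx =>
      (hg x ((le_min hs ht).trans hx.1)).continuousAt.continuousWithinAt
  rw [Metric.tendsto_atTop]
  intro ε hε
  set h := ε / (2 * (L + 1)) with hh_def
  have hh : 0 < h := by positivity
  have hLh : L * h ≤ ε / 2 := by
    rw [hh_def, mul_div_assoc', div_le_div_iff₀ (by positivity) two_pos]
    nlinarith
  -- `∫ a..t, g` converges, so its increments over windows of length `h` vanish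
  have hwin : Tendsto (fun t => ∫ s in t..t + h, g s) atTop (𝓝 0) := by
    have hF := intervalIntegral_tendsto_integral_Ioi a hint tendsto_id
    have hsub := (hF.comp (tendsto_atTop_add_const_right _ h tendsto_id)).sub hF
    rw [sub_self] at hsub
    refine hsub.congr' ?_
    filter_upwards [eventually_ge_atTop a] with t ht
    exact intervalIntegral.integral_interval_sub_left (hii a (t + h) le_rfl (by linarith))
      (hii a t le_rfl ht)
  obtain ⟨T, hT⟩ := eventually_atTop.1
    ((hwin.eventually (Metric.ball_mem_nhds 0 (by positivity : 0 < h * (ε / 2)))).and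
      (eventually_ge_atTop a))
  refine ⟨T, fun t ht => ?_⟩
  obtain ⟨hwin_t, hat⟩ := hT t ht
  rw [Real.dist_eq, sub_zero] at hwin_t ⊢
  have hdev := abs_mul_sub_integral_le (C := L * h) hh.le (hii t (t + h) hat (by linarith))
    fun s hs => (hlip t s hat (hat.trans hs.1.le)).trans <| by
      rw [abs_sub_comm, abs_of_nonneg (by linarith [hs.1])]
      gcongr
      linarith [hs.2]
  have hgt : h * |g t| < h * ε := by
    calc h * |g t| = |h * g t| := by rw [abs_mul, abs_of_pos hh]
      _ ≤ |h * g t - ∫ s in t..t + h, g s| + |∫ s in t..t + h, g s| := by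
          linarith [abs_sub_abs_le_abs_sub (h * g t) (∫ s in t..t + h, g s)]
      _ < L * h * h + h * (ε / 2) := add_lt_add_of_le_of_lt hdev hwin_t
      _ ≤ h * ε := by nlinarith
  exact lt_of_mul_lt_mul_left hgt hh.le

theorem not_tendsto_zero_of_hasDerivAt_of_pos_mul {φ y r F : ℝ → ℝ} {K : Set ℝ}
    (hK : IsCompact K) (hF : ContinuousOn F K) (hFK : ∀ s ∈ K, 0 < s * F s)
    (hφ : ∀ᶠ t in atTop, HasDerivAt φ (y t) t)
    (hy : ∀ᶠ t in atTop, HasDerivAt y (r t - F (φ t)) t) (hr : Tendsto r atTop (𝓝 0))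
    (hφK : ∀ᶠ t in atTop, φ t ∈ K) : ¬ Tendsto y atTop (𝓝 0) := by
  intro hy0
  obtain ⟨c, hc, hcK⟩ := hK.exists_forall_le' (f := fun s => s * F s) (continuousOn_id.mul hF) hFK
  obtain ⟨C, hC⟩ := hK.isBounded.exists_norm_le
  have hφb : IsBoundedUnder (· ≤ ·) atTop (norm ∘ φ) :=
    isBoundedUnder_of_eventually_le (hφK.mono fun t ht => hC _ ht)
  -- the virial φ y has derivative y² + φ r - φ F(φ), eventually ≤ -c/2
  have hrest : Tendsto (fun t => y t ^ 2 + φ t * r t) atTop (𝓝 0) := by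
    simpa using (hy0.pow 2).add (isBoundedUnder_le_mul_tendsto_zero hφb hr)
  have hdrift : Tendsto (fun t => φ t * y t) atTop atBot := by
    refine tendsto_atBot_of_hasDerivAt_le_neg (half_pos hc)
      (f' := fun t => y t ^ 2 + φ t * r t - φ t * F (φ t)) ?_ ?_
    · filter_upwards [hφ, hy] with t hφt hyt
      exact (hφt.mul hyt).congr_deriv (by ring)
    · filter_upwards [hφK, hrest.eventually (eventually_lt_nhds (half_pos hc))] with t htK ht
      linarith [hcK _ htK]
  exact not_tendsto_nhds_of_tendsto_atBot hdrift 0 (isBoundedUnder_le_mul_tendsto_zero hφb hy0)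

theorem isCompact_setOf_le_of_eventually_lt {V : ℝ → ℝ} (hV : Continuous V) {c : ℝ}
    (htop : ∀ᶠ s in atTop, c < V s) (hbot : ∀ᶠ s in atBot, c < V s) :
    IsCompact {s | V s ≤ c} := by
  obtain ⟨M, hM⟩ := htop.exists_forall_of_atTop
  obtain ⟨m, hm⟩ := hbot.exists_forall_of_atBot
  refine (isCompact_Icc (a := m) (b := M)).of_isClosed_subset
    (isClosed_le hV continuous_const) fun s hs => ⟨?_, ?_⟩
  · by_contra! h
    exact (hm s h.le).not_ge hs
  · by_contra! h
    exact (hM s h.le).not_ge hs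

theorem tendsto_of_tendsto_comp_of_isCompact {α X : Type*} [TopologicalSpace X] {l : Filter α}
    {K : Set X} (hK : IsCompact K) {g : X → ℝ} (hg : ContinuousOn g K) {x₀ : X}
    (hpos : ∀ x ∈ K, x ≠ x₀ → 0 < g x) {φ : α → X} (hφK : ∀ᶠ t in l, φ t ∈ K)
    (hgφ : Tendsto (fun t => g (φ t)) l (𝓝 0)) : Tendsto φ l (𝓝 x₀) := by
  refine tendsto_nhds.2 fun U hU hx₀ => ?_
  obtain ⟨c, hc, hcK⟩ := (hK.diff hU).exists_forall_le' (hg.mono sdiff_subset)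
    fun x hx => hpos x hx.1 fun h => hx.2 (h ▸ hx₀)
  filter_upwards [hφK, hgφ.eventually (eventually_lt_nhds hc)] with t htK htc
  by_contra htU
  exact (hcK (φ t) ⟨htK, htU⟩).not_gt htc

structure IsFLRWSolution (V χ : ℝ → ℝ) (γ t₀ : ℝ) (H ρm ρr y φ : ℝ → ℝ) : Prop where
  hasDerivAt_H : ∀ t, t₀ ≤ t → HasDerivAt H (-(1/2) * (γ * ρm t + (4/3) * ρr t + (y t)^2)) t
  hasDerivAt_y : ∀ t, t₀ ≤ t →
    HasDerivAt y (-3*H t*y t - deriv V (φ t) + (1/2)*(4-3*γ)*ρm t*(deriv χ (φ t) / χ (φ t))) t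
  hasDerivAt_φ : ∀ t, t₀ ≤ t → HasDerivAt φ (y t) t
  constraint : ∀ t, t₀ ≤ t → 3*(H t)^2 = (1/2)*(y t)^2 + V (φ t) + ρm t + ρr t
  ρm_nonneg : ∀ t, t₀ ≤ t → 0 ≤ ρm t
  ρr_nonneg : ∀ t, t₀ ≤ t → 0 ≤ ρr t

namespace IsFLRWSolution

variable {V χ : ℝ → ℝ} {γ t₀ : ℝ} {H ρm ρr y φ : ℝ → ℝ}

theorem antitoneOn (hs : IsFLRWSolution V χ γ t₀ H ρm ρr y φ) (hγ : 0 ≤ γ) :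
    AntitoneOn H (Ici t₀) := by
  refine antitoneOn_of_hasDerivWithinAt_nonpos (convex_Ici t₀)
    (fun t ht => (hs.hasDerivAt_H t ht).continuousAt.continuousWithinAt)
    (fun t ht => (hs.hasDerivAt_H t (interior_subset ht)).hasDerivWithinAt) fun t ht => ?_
  have ht : t₀ ≤ t := interior_subset ht
  nlinarith [hs.ρm_nonneg t ht, hs.ρr_nonneg t ht, sq_nonneg (y t)]

theorem potential_le (hs : IsFLRWSolution V χ γ t₀ H ρm ρr y φ) {t : ℝ} (ht : t₀ ≤ t) :
    V (φ t) ≤ 3 * H t ^ 2 := by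
  nlinarith [hs.constraint t ht, hs.ρm_nonneg t ht, hs.ρr_nonneg t ht, sq_nonneg (y t)]

theorem abs_deriv_H_le (hs : IsFLRWSolution V χ γ t₀ H ρm ρr y φ) (hγ : 0 ≤ γ)
    (hV : ∀ s, 0 ≤ V s) {t : ℝ} (ht : t₀ ≤ t) :
    |-(1/2) * (γ * ρm t + (4/3) * ρr t + (y t)^2)| ≤ 3 * (γ + 2) * H t ^ 2 := by
  have hm := hs.ρm_nonneg t ht
  have hr := hs.ρr_nonneg t ht
  rw [abs_of_nonpos (by nlinarith [sq_nonneg (y t)])]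
  nlinarith [hs.constraint t ht, hV (φ t), sq_nonneg (y t), mul_nonneg hγ hm, mul_nonneg hγ hr,
    mul_nonneg hγ (sq_nonneg (y t)), mul_nonneg hγ (hV (φ t))]

theorem hubble_nonneg (hs : IsFLRWSolution V χ γ t₀ H ρm ρr y φ) (hγ : 0 ≤ γ)
    (hV : ∀ s, 0 ≤ V s) (hH₀ : 0 ≤ H t₀) : ∀ t, t₀ ≤ t → 0 ≤ H t :=
  nonneg_of_abs_deriv_le_mul_sq hs.hasDerivAt_H (fun _ ht => hs.abs_deriv_H_le hγ hV ht) hH₀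

theorem integrableOn_sq_hubble_sub_potential (hs : IsFLRWSolution V χ γ t₀ H ρm ρr y φ)
    (hγ : 0 < γ) (hV : Continuous V) {Hm : ℝ} (hHm : Tendsto H atTop (𝓝 Hm)) :
    IntegrableOn (fun t => 3 * H t ^ 2 - V (φ t)) (Ioi t₀) := by
  have hH' : IntegrableOn (fun t => -(1/2) * (γ * ρm t + (4/3) * ρr t + (y t)^2)) (Ioi t₀) :=
    integrableOn_Ioi_deriv_of_nonpos (hs.hasDerivAt_H t₀ le_rfl).continuousAt.continuousWithinAt
      (fun t ht => hs.hasDerivAt_H t ht.le) (fun t ht => by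
        nlinarith [hs.ρm_nonneg t ht.le, hs.ρr_nonneg t ht.le, sq_nonneg (y t)]) hHm
  refine (Integrable.const_mul hH' (-(2 * (γ + 1) / γ))).mono' ?_ ?_
  · refine ContinuousOn.aestronglyMeasurable (fun t ht => ?_) measurableSet_Ioi
    have ht : t₀ ≤ t := le_of_lt ht
    exact (((hs.hasDerivAt_H t ht).continuousAt.pow 2).const_mul 3 |>.sub
      (hV.continuousAt.comp (hs.hasDerivAt_φ t ht).continuousAt)).continuousWithinAt
  · refine ae_restrict_of_forall_mem measurableSet_Ioi fun t ht => ?_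
    have ht : t₀ ≤ t := le_of_lt ht
    have hm := hs.ρm_nonneg t ht
    have hr := hs.ρr_nonneg t ht
    have hkin : 3 * H t ^ 2 - V (φ t) = (1/2) * y t ^ 2 + ρm t + ρr t := by
      linarith [hs.constraint t ht]
    have hX : γ * ((1/2) * y t ^ 2 + ρm t + ρr t)
        ≤ (γ + 1) * (γ * ρm t + (4/3) * ρr t + (y t)^2) := by
      nlinarith [sq_nonneg (y t), mul_nonneg hγ.le hm, mul_nonneg hγ.le hr,
        mul_nonneg hγ.le (sq_nonneg (y t))]
    rw [Real.norm_eq_abs, hkin, abs_of_nonneg (by positivity)]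
    calc (1/2) * y t ^ 2 + ρm t + ρr t
        ≤ (γ + 1) * (γ * ρm t + (4/3) * ρr t + (y t)^2) / γ := by
          rw [le_div_iff₀ hγ]; linarith
      _ = -(2 * (γ + 1) / γ) * (-(1/2) * (γ * ρm t + (4/3) * ρr t + (y t)^2)) := by ring

theorem abs_deriv_sq_hubble_sub_potential_le (hs : IsFLRWSolution V χ γ t₀ H ρm ρr y φ)
    (hγ : 0 ≤ γ) (hV : ∀ s, 0 ≤ V s) (hH₀ : 0 ≤ H t₀) {C : ℝ}
    (hC : ∀ t, t₀ ≤ t → |deriv V (φ t)| ≤ C) {t : ℝ} (ht : t₀ ≤ t) :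
    |6 * H t * (-(1/2) * (γ * ρm t + (4/3) * ρr t + (y t)^2)) - deriv V (φ t) * y t|
      ≤ 18 * (γ + 2) * H t₀ ^ 3 + C * √(6 * H t₀ ^ 2) := by
  have hH := hs.hubble_nonneg hγ hV hH₀ t ht
  have hHt : H t ≤ H t₀ := hs.antitoneOn hγ self_mem_Ici ht ht
  refine (abs_sub _ _).trans (add_le_add ?_ ?_)
  · rw [abs_mul, abs_of_nonneg (by positivity)]
    calc 6 * H t * |-(1/2) * (γ * ρm t + (4/3) * ρr t + (y t)^2)|
        ≤ 6 * H t * (3 * (γ + 2) * H t ^ 2) := by gcongr; exact hs.abs_deriv_H_le hγ hV ht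
      _ = 18 * (γ + 2) * H t ^ 3 := by ring
      _ ≤ 18 * (γ + 2) * H t₀ ^ 3 := by gcongr
  · rw [abs_mul]
    refine mul_le_mul (hC t ht) (Real.abs_le_sqrt ?_) (abs_nonneg _)
      ((abs_nonneg _).trans (hC t ht))
    linarith [hs.constraint t ht, hs.ρm_nonneg t ht, hs.ρr_nonneg t ht, hV (φ t),
      pow_le_pow_left₀ hH hHt 2]

theorem tendsto_kinetic (hs : IsFLRWSolution V χ γ t₀ H ρm ρr y φ) (hγ : 0 < γ)
    (hV : ∀ s, 0 ≤ V s) (hV1 : ContDiff ℝ 1 V) {K : Set ℝ} (hK : IsCompact K)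
    (hφK : ∀ t, t₀ ≤ t → φ t ∈ K) (hH₀ : 0 ≤ H t₀) {Hm : ℝ} (hHm : Tendsto H atTop (𝓝 Hm)) :
    Tendsto (fun t => (1/2) * y t ^ 2 + ρm t + ρr t) atTop (𝓝 0) := by
  obtain ⟨C, hC⟩ := hK.exists_bound_of_continuousOn (hV1.continuous_deriv le_rfl).continuousOn
  have hG : ∀ t, t₀ ≤ t → HasDerivAt (fun t => 3 * H t ^ 2 - V (φ t))
      (6 * H t * (-(1/2) * (γ * ρm t + (4/3) * ρr t + (y t)^2)) - deriv V (φ t) * y t) t :=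
    fun t ht => ((((hs.hasDerivAt_H t ht).pow 2).const_mul 3).sub
      ((hV1.differentiable one_ne_zero (φ t)).hasDerivAt.comp t (hs.hasDerivAt_φ t ht))).congr_deriv
      (by ring)
  have hG' := fun t (ht : t₀ ≤ t) => hs.abs_deriv_sq_hubble_sub_potential_le hγ.le hV hH₀
    (fun t ht => hC _ (hφK t ht)) ht
  refine (tendsto_zero_of_integrableOn_of_abs_deriv_le hG hG'
    (hs.integrableOn_sq_hubble_sub_potential hγ hV1.continuous hHm)).congr' ?_
  filter_upwards [eventually_ge_atTop t₀] with t ht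
  linarith [hs.constraint t ht]

theorem tendsto_y (hs : IsFLRWSolution V χ γ t₀ H ρm ρr y φ)
    (hkin : Tendsto (fun t => (1/2) * y t ^ 2 + ρm t + ρr t) atTop (𝓝 0)) :
    Tendsto y atTop (𝓝 0) := by
  have hsqrt : Tendsto (fun t => √(2 * ((1/2) * y t ^ 2 + ρm t + ρr t))) atTop (𝓝 0) := by
    simpa using (hkin.const_mul 2).sqrt
  refine (tendsto_zero_iff_abs_tendsto_zero y).2
    (squeeze_zero' (Eventually.of_forall fun t => abs_nonneg _) ?_ hsqrt)
  filter_upwards [eventually_ge_atTop t₀] with t ht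
  exact Real.abs_le_sqrt (by linarith [hs.ρm_nonneg t ht, hs.ρr_nonneg t ht])

theorem tendsto_ρm (hs : IsFLRWSolution V χ γ t₀ H ρm ρr y φ)
    (hkin : Tendsto (fun t => (1/2) * y t ^ 2 + ρm t + ρr t) atTop (𝓝 0)) :
    Tendsto ρm atTop (𝓝 0) := by
  refine squeeze_zero' ((eventually_ge_atTop t₀).mono hs.ρm_nonneg) ?_ hkin
  filter_upwards [eventually_ge_atTop t₀] with t ht
  nlinarith [hs.ρr_nonneg t ht, sq_nonneg (y t)]

theorem tendsto_potential (hs : IsFLRWSolution V χ γ t₀ H ρm ρr y φ)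
    (hkin : Tendsto (fun t => (1/2) * y t ^ 2 + ρm t + ρr t) atTop (𝓝 0)) {Hm : ℝ}
    (hHm : Tendsto H atTop (𝓝 Hm)) : Tendsto (fun t => V (φ t)) atTop (𝓝 (3 * Hm ^ 2)) := by
  have hlim := ((hHm.pow 2).const_mul 3).sub hkin
  rw [sub_zero] at hlim
  refine hlim.congr' ?_
  filter_upwards [eventually_ge_atTop t₀] with t ht
  linarith [hs.constraint t ht]

theorem hubble_limit_eq_zero (hs : IsFLRWSolution V χ γ t₀ H ρm ρr y φ) (hV1 : ContDiff ℝ 1 V)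
    (hV0 : V 0 = 0) (hVsign : ∀ s, s ≠ 0 → 0 < s * deriv V s) {K : Set ℝ} (hK : IsCompact K)
    (hχ : ContinuousOn (fun s => deriv χ s / χ s) K) (hφK : ∀ t, t₀ ≤ t → φ t ∈ K)
    (hkin : Tendsto (fun t => (1/2) * y t ^ 2 + ρm t + ρr t) atTop (𝓝 0)) {Hm : ℝ}
    (hHm : Tendsto H atTop (𝓝 Hm)) : Hm = 0 := by
  by_contra hHm0
  have hVlim : 0 < 3 * Hm ^ 2 := by positivity
  have hy0 := hs.tendsto_y hkin
  obtain ⟨C, hC⟩ := hK.exists_bound_of_continuousOn hχ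
  have hr : Tendsto (fun t => -3 * H t * y t
      + (1/2) * (4 - 3*γ) * ρm t * (deriv χ (φ t) / χ (φ t))) atTop (𝓝 0) := by
    have hHy : Tendsto (fun t => -3 * H t * y t) atTop (𝓝 0) := by
      simpa using (hHm.const_mul (-3)).mul hy0
    have hρm : Tendsto (fun t => (1/2) * (4 - 3*γ) * ρm t) atTop (𝓝 0) := by
      simpa using (hs.tendsto_ρm hkin).const_mul ((1/2) * (4 - 3*γ))
    have hρmq := hρm.zero_mul_isBoundedUnder_le
      (isBoundedUnder_of_eventually_le ((eventually_ge_atTop t₀).mono fun t ht => hC _ (hφK t ht)))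
    simpa using hHy.add hρmq
  -- eventually φ stays in the compact set `K ∩ {V ≥ 3 Hm² / 2}`, which avoids the critical point 0
  refine not_tendsto_zero_of_hasDerivAt_of_pos_mul (K := K ∩ {s | 3 * Hm ^ 2 / 2 ≤ V s})
    (F := deriv V) (hK.inter_right (isClosed_le continuous_const hV1.continuous))
    (hV1.continuous_deriv le_rfl).continuousOn ?_ ((eventually_ge_atTop t₀).mono hs.hasDerivAt_φ)
    ((eventually_ge_atTop t₀).mono fun t ht => (hs.hasDerivAt_y t ht).congr_deriv ?_) hr ?_ hy0
  · rintro s ⟨-, hsV⟩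
    refine hVsign s fun h => ?_
    rw [mem_ofPred_eq, h, hV0] at hsV
    linarith
  · ring
  · filter_upwards [eventually_ge_atTop t₀,
      (hs.tendsto_potential hkin hHm).eventually (eventually_ge_nhds (half_lt_self hVlim))]
      with t ht hV
    exact ⟨hφK t ht, hV⟩

end IsFLRWSolution

theorem stmt5_general (H ρm ρr y φ V χ : ℝ → ℝ) (γ t₀ : ℝ)
    (hγ0 : 0 < γ)
    (hχpos : ∀ s, 0 < χ s)
    (hVC2 : ContDiff ℝ 2 V) (hχC2 : ContDiff ℝ 2 χ)
    (hVnn : ∀ s, 0 ≤ V s)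
    (hVzero : ∀ s, V s = 0 ↔ s = 0)
    (hH : ∀ t, t₀ ≤ t →
      HasDerivAt H (-(1/2) * (γ * ρm t + (4/3) * ρr t + (y t)^2)) t)
    (hy : ∀ t, t₀ ≤ t →
      HasDerivAt y (-3*H t*y t - deriv V (φ t) + (1/2)*(4-3*γ)*ρm t*(deriv χ (φ t) / χ (φ t))) t)
    (hφ : ∀ t, t₀ ≤ t → HasDerivAt φ (y t) t)
    (hconstraint : ∀ t, t₀ ≤ t →
      3*(H t)^2 = (1/2)*(y t)^2 + V (φ t) + ρm t + ρr t)
    (hmnn : ∀ t, t₀ ≤ t → 0 ≤ ρm t)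
    (hrnn : ∀ t, t₀ ≤ t → 0 ≤ ρr t)
    (hH0 : 0 < H t₀)
    (hVinc : ∀ s, 0 < s → 0 < deriv V s)
    (hVdec : ∀ s, s < 0 → deriv V s < 0)
    (Lp Lm : EReal)
    (hLp : Tendsto (fun s => (V s : EReal)) atTop (nhds Lp))
    (hLm : Tendsto (fun s => (V s : EReal)) atBot (nhds Lm))
    (hinit : ((3 * (H t₀)^2 : ℝ) : EReal) < min Lp Lm) :
    Tendsto φ atTop (nhds 0) ∧ Tendsto H atTop (nhds 0) := by
  have hV1 : ContDiff ℝ 1 V := hVC2.of_le one_le_two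
  have hs : IsFLRWSolution V χ γ t₀ H ρm ρr y φ := ⟨hH, hy, hφ, hconstraint, hmnn, hrnn⟩
  have hHnn := hs.hubble_nonneg hγ0.le hVnn hH0.le
  have hS : IsCompact {s | V s ≤ 3 * H t₀ ^ 2} := isCompact_setOf_le_of_eventually_lt hV1.continuous
    ((hLp.eventually_const_lt (hinit.trans_le (min_le_left _ _))).mono
      fun _ => EReal.coe_lt_coe_iff.1)
    ((hLm.eventually_const_lt (hinit.trans_le (min_le_right _ _))).mono
      fun _ => EReal.coe_lt_coe_iff.1)
  have hφS : ∀ t, t₀ ≤ t → φ t ∈ {s | V s ≤ 3 * H t₀ ^ 2} := fun t ht =>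
    (hs.potential_le ht).trans
      (by gcongr; exacts [hHnn t ht, hs.antitoneOn hγ0.le self_mem_Ici ht ht])
  obtain ⟨Hm, hHm⟩ := (hs.antitoneOn hγ0.le).exists_tendsto_atTop ⟨0, forall_mem_image.2 hHnn⟩
  have hkin := hs.tendsto_kinetic hγ0 hVnn hV1 hS hφS hH0.le hHm
  have hχ' : Continuous fun s => deriv χ s / χ s :=
    (hχC2.continuous_deriv one_le_two).div hχC2.continuous fun s => (hχpos s).ne'
  obtain rfl : Hm = 0 := hs.hubble_limit_eq_zero hV1 ((hVzero 0).2 rfl)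
    (fun s hs0 => hs0.lt_or_gt.elim (fun h => mul_pos_of_neg_of_neg h (hVdec s h))
      fun h => mul_pos h (hVinc s h))
    hS hχ'.continuousOn hφS hkin hHm
  refine ⟨tendsto_of_tendsto_comp_of_isCompact hS hV1.continuous.continuousOn
    (fun s _ hs0 => (hVnn s).lt_of_ne fun h => hs0 ((hVzero s).1 h.symm))
    ((eventually_ge_atTop t₀).mono hφS) ?_, hHm⟩
  simpa using hs.tendsto_potential hkin hHm

/-- Proposition 1: if `V ≥ 0` with `V(φ) = 0 ⟺ φ = 0`, `V'` is bounded on every set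
on which `V` is bounded, and `χ'/χ ≤ 2K/((2−γ)(4−3γ))` for some constant `K ≠ 0`,
then along any solution of the cosmological system with `H(t₀) > 0`,
`(ρ_m, ρ_r, y) → (0, 0, 0)` as `t → ∞`. -/
theorem stmt5 (H ρm ρr y φ V χ : ℝ → ℝ) (γ t₀ K : ℝ)
    (hγ0 : 0 < γ) (hγ2 : γ < 2) (hγ43 : γ ≠ 4/3)
    (hχpos : ∀ s, 0 < χ s)
    (hVC2 : ContDiff ℝ 2 V) (hχC2 : ContDiff ℝ 2 χ)
    (hVnn : ∀ s, 0 ≤ V s)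
    (hVzero : ∀ s, V s = 0 ↔ s = 0)
    (hV'bdd : ∀ A : Set ℝ, (∃ B, ∀ s ∈ A, V s ≤ B) → ∃ B', ∀ s ∈ A, |deriv V s| ≤ B')
    (hK : K ≠ 0)
    (hχbd : ∀ s, deriv χ s / χ s ≤ 2*K / ((2-γ)*(4-3*γ)))
    (hH : ∀ t, t₀ ≤ t →
      HasDerivAt H (-(1/2) * (γ * ρm t + (4/3) * ρr t + (y t)^2)) t)
    (hm : ∀ t, t₀ ≤ t →
      HasDerivAt ρm (-3*γ*H t*ρm t - (1/2)*(4-3*γ)*ρm t*y t*(deriv χ (φ t) / χ (φ t))) t)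
    (hr : ∀ t, t₀ ≤ t → HasDerivAt ρr (-4*H t*ρr t) t)
    (hy : ∀ t, t₀ ≤ t →
      HasDerivAt y (-3*H t*y t - deriv V (φ t) + (1/2)*(4-3*γ)*ρm t*(deriv χ (φ t) / χ (φ t))) t)
    (hφ : ∀ t, t₀ ≤ t → HasDerivAt φ (y t) t)
    (hconstraint : ∀ t, t₀ ≤ t →
      3*(H t)^2 = (1/2)*(y t)^2 + V (φ t) + ρm t + ρr t)
    (hmnn : ∀ t, t₀ ≤ t → 0 ≤ ρm t)
    (hrnn : ∀ t, t₀ ≤ t → 0 ≤ ρr t)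
    (hH0 : 0 < H t₀)
    (hVinc : ∀ s, 0 < s → 0 < deriv V s)
    (hVdec : ∀ s, s < 0 → deriv V s < 0)
    (Lp Lm : EReal) (hLp0 : (0 : EReal) < Lp) (hLm0 : (0 : EReal) < Lm)
    (hLp : Tendsto (fun s => (V s : EReal)) atTop (nhds Lp))
    (hLm : Tendsto (fun s => (V s : EReal)) atBot (nhds Lm))
    (hinit : ((3 * (H t₀)^2 : ℝ) : EReal) < min Lp Lm) :
    Tendsto φ atTop (nhds 0) ∧ Tendsto H atTop (nhds 0) :=
  stmt5_general H ρm ρr y φ V χ γ t₀ hγ0 hχpos hVC2 hχC2 hVnn hVzero hH hy hφ hconstraint hmnn hrnn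
    hH0 hVinc hVdec Lp Lm hLp hLm hinit
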